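/- arXiv:2004.05276 — 3 statements merged into one kernel-verified Lean document; each statement's English description precedes it below -/
import Mathlib

section
/- Comparison principle for the discrete nonlinear reaction-diffusion equation: if $u^+(t,\cdot)$ is a supersolution and $u^-(t,\cdot)$ a subsolution of $\partial_t u(t,x) = \Delta^N \varphi(u(t,x)) + K f(u(t,x))$ on the discrete torus $\mathbb{T}^d_N$ (i.e. they satisfy the equation with $\ge$ and $\le$ respectively), and $u^-(0,x) \le u^+(0,x)$ for all $x$, then $u^-(t,x)\le u^+(t,x)$ for all $t\ge 0$ and all $x\in\mathbb{T}^d_N$. -/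
/-- The `i`-th unit vector in the discrete torus `(ℤ/Nℤ)^d`. -/
def unitVec (N d : ℕ) (i : Fin d) : Fin d → ZMod N := fun j => if j = i then 1 else 0

/-- The discrete Laplacian `Δ^N v(x) = N² ∑ᵢ (v(x+eᵢ) + v(x-eᵢ) - 2 v(x))`. -/
noncomputable def discLap (N d : ℕ) (v : (Fin d → ZMod N) → ℝ) (x : Fin d → ZMod N) : ℝ :=
  (N : ℝ) ^ 2 * ∑ i : Fin d, (v (x + unitVec N d i) + v (x - unitVec N d i) - 2 * v x)

/-!
Put `w = u⁻ - u⁺` and `g t = ∑ₓ max (w t x) 0`. The right derivative of `g` is the sum of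
`∂ₜ w` over the sites where `w` is (about to become) positive. There the diffusion term sums to
a nonpositive number, by a discrete Kato inequality: summing `Δ^N h` over a set on which `h ≥ 0`,
with `h ≤ 0` outside, gives at most `0` (apply it to `h = φ(u⁻) - φ(u⁺)`, using monotonicity of
`φ`). The reaction term is at most `L · g t`, with `L` a Lipschitz constant of `K f` on the
compact range of `u^±` on `[0, T]`. Since `g 0 = 0`, Grönwall's inequality gives `g = 0` on `[0, T]`.
-/

open Finset Set Filter Topology Asymptotics NNReal

section Kato

variable {G : Type*} [AddCommGroup G] [Fintype G] {h : G → ℝ} {S : Finset G}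

theorem sum_comp_add_le_of_nonneg_on (hS : ∀ x ∈ S, 0 ≤ h x) (hSc : ∀ x ∉ S, h x ≤ 0) (e : G) :
    ∑ x ∈ S, h (x + e) ≤ ∑ x ∈ S, h x :=
  calc ∑ x ∈ S, h (x + e)
      ≤ ∑ x ∈ S, max (h (x + e)) 0 := sum_le_sum fun _ _ => le_max_left _ _
    _ ≤ ∑ x, max (h (x + e)) 0 :=
        sum_le_univ_sum_of_nonneg fun _ => le_max_right _ _
    _ = ∑ x, max (h x) 0 := Equiv.sum_comp (Equiv.addRight e) fun x => max (h x) 0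
    _ = ∑ x ∈ S, max (h x) 0 :=
        (sum_subset (subset_univ S) fun x _ hx => max_eq_right (hSc x hx)).symm
    _ = ∑ x ∈ S, h x := sum_congr rfl fun x hx => max_eq_left (hS x hx)

theorem sum_second_diff_nonpos_of_nonneg_on (hS : ∀ x ∈ S, 0 ≤ h x)
    (hSc : ∀ x ∉ S, h x ≤ 0) (e : G) :
    ∑ x ∈ S, (h (x + e) + h (x - e) - 2 * h x) ≤ 0 := by
  have hplus := sum_comp_add_le_of_nonneg_on hS hSc e
  have hminus := sum_comp_add_le_of_nonneg_on hS hSc (-e)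
  simp only [← sub_eq_add_neg] at hminus
  rw [sum_sub_distrib, sum_add_distrib, ← mul_sum]
  linarith

end Kato

section DiscreteLaplacian

variable {N d : ℕ}

theorem discLap_sub (a b : (Fin d → ZMod N) → ℝ) (x : Fin d → ZMod N) :
    discLap N d (fun y => a y - b y) x = discLap N d a x - discLap N d b x := by
  simp only [discLap, ← mul_sub, ← sum_sub_distrib]
  congr 1
  exact sum_congr rfl fun i _ => by ring

variable [NeZero N]

theorem sum_discLap_nonpos {h : (Fin d → ZMod N) → ℝ} {S : Finset (Fin d → ZMod N)}
    (hS : ∀ x ∈ S, 0 ≤ h x) (hSc : ∀ x ∉ S, h x ≤ 0) :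
    ∑ x ∈ S, discLap N d h x ≤ 0 := by
  simp only [discLap, ← mul_sum]
  rw [sum_comm]
  exact mul_nonpos_of_nonneg_of_nonpos (by positivity)
    (sum_nonpos fun i _ => sum_second_diff_nonpos_of_nonneg_on hS hSc _)

theorem sum_sub_le_of_sub_super {φ R : ℝ → ℝ} (hφ : Monotone φ) {L : ℝ≥0} {V : Set ℝ}
    (hR : LipschitzOnWith L R V) {u v du dv : (Fin d → ZMod N) → ℝ}
    (hu : ∀ x, u x ∈ V) (hv : ∀ x, v x ∈ V)
    (hsub : ∀ x, du x ≤ discLap N d (fun y => φ (u y)) x + R (u x))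
    (hsuper : ∀ x, discLap N d (fun y => φ (v y)) x + R (v x) ≤ dv x)
    {S : Finset (Fin d → ZMod N)} (hS : ∀ x ∈ S, v x ≤ u x) (hSc : ∀ x ∉ S, u x ≤ v x) :
    ∑ x ∈ S, (du x - dv x) ≤ L * ∑ x, max (u x - v x) 0 := by
  have hdiffusion : ∑ x ∈ S, discLap N d (fun y => φ (u y) - φ (v y)) x ≤ 0 :=
    sum_discLap_nonpos (fun x hx => sub_nonneg.2 (hφ (hS x hx)))
      fun x hx => sub_nonpos.2 (hφ (hSc x hx))
  have hreaction : ∀ x ∈ S, R (u x) - R (v x) ≤ L * max (u x - v x) 0 := fun x hx => by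
    rw [max_eq_left (sub_nonneg.2 (hS x hx)), ← abs_of_nonneg (sub_nonneg.2 (hS x hx))]
    exact (le_abs_self _).trans (hR.dist_le_mul _ (hu x) _ (hv x))
  calc ∑ x ∈ S, (du x - dv x)
      ≤ ∑ x ∈ S, (discLap N d (fun y => φ (u y) - φ (v y)) x + (R (u x) - R (v x))) :=
        sum_le_sum fun x _ => by
          rw [discLap_sub]
          linarith [hsub x, hsuper x]
    _ ≤ ∑ x ∈ S, L * max (u x - v x) 0 := by
        rw [sum_add_distrib]
        linarith [sum_le_sum hreaction]
    _ ≤ L * ∑ x, max (u x - v x) 0 := by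
        rw [mul_sum]
        exact sum_le_univ_sum_of_nonneg fun x => by positivity

end DiscreteLaplacian

theorem HasDerivAt.hasDerivWithinAt_Ici_max_zero {w : ℝ → ℝ} {w' t : ℝ}
    (hw : HasDerivAt w w' t) :
    HasDerivWithinAt (fun s => max (w s) 0)
      (if 0 < w t ∨ w t = 0 ∧ 0 < w' then w' else 0) (Ici t) t := by
  rcases lt_trichotomy (w t) 0 with hneg | hzero | hpos
  · rw [if_neg (by rintro (h | ⟨h, _⟩) <;> linarith)]
    refine (hasDerivAt_const t (0 : ℝ)).hasDerivWithinAt.congr_of_eventuallyEq ?_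
      (max_eq_right hneg.le)
    exact eventually_nhdsWithin_of_eventually_nhds
      ((hw.continuousAt.eventually_lt_const hneg).mono fun s hs => max_eq_right hs.le)
  · have hval : (if 0 < w t ∨ w t = 0 ∧ 0 < w' then w' else 0) = max w' 0 := by
      split_ifs with h' <;> simp_all [le_of_lt, le_of_not_gt]
    rw [hval, hasDerivWithinAt_iff_isLittleO]
    refine IsBigO.trans_isLittleO ?_ ((hasDerivAt_iff_isLittleO.1 hw).mono nhdsWithin_le_nhds)
    refine IsBigO.of_bound 1 (eventually_nhdsWithin_of_forall fun s (hs : t ≤ s) => ?_)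
    -- the kink of `max · 0` at `w t = 0` is harmless to the right of `t`:
    -- `(s - t) * max w' 0 = max ((s - t) * w') 0` there
    rw [hzero, max_self, sub_zero, smul_eq_mul, smul_eq_mul, one_mul, Real.norm_eq_abs,
      Real.norm_eq_abs, mul_max_of_nonneg _ _ (sub_nonneg.2 hs), mul_zero]
    simpa using abs_max_sub_max_le_max (w s) 0 ((s - t) * w') 0
  · rw [if_pos (Or.inl hpos)]
    refine hw.hasDerivWithinAt.congr_of_eventuallyEq ?_ (max_eq_left hpos.le)
    exact eventually_nhdsWithin_of_eventually_nhds
      ((hw.continuousAt.eventually_const_lt hpos).mono fun s hs => max_eq_left hs.le)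

theorem nonpos_of_sum_deriv_le_sum_max_zero {ι : Type*} [Fintype ι] {w w' : ℝ → ι → ℝ}
    {L T : ℝ} (hT : 0 ≤ T) (hw : ∀ t x, HasDerivAt (fun s => w s x) (w' t x) t)
    (h0 : ∀ x, w 0 x ≤ 0)
    (hbound : ∀ t ∈ Ico 0 T, ∀ S : Finset ι, (∀ x ∈ S, 0 ≤ w t x) → (∀ x ∉ S, w t x ≤ 0) →
      ∑ x ∈ S, w' t x ≤ L * ∑ x, max (w t x) 0)
    (x : ι) : w T x ≤ 0 := by
  classical
  set g : ℝ → ℝ := fun t => ∑ x, max (w t x) 0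
  set S : ℝ → Finset ι := fun t => {x | 0 < w t x ∨ w t x = 0 ∧ 0 < w' t x}
  have hg : ∀ t, HasDerivWithinAt g (∑ x ∈ S t, w' t x) (Ici t) t := fun t => by
    simpa only [S, sum_filter] using
      HasDerivWithinAt.fun_sum fun x _ => (hw t x).hasDerivWithinAt_Ici_max_zero
  have hgcont : Continuous g :=
    continuous_finsetSum _ fun x _ =>
      (continuous_iff_continuousAt.2 fun t => (hw t x).continuousAt).max continuous_const
  have hgT : g T ≤ 0 := by
    have := le_gronwallBound_of_liminf_deriv_right_le (δ := 0) (ε := 0) hgcont.continuousOn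
      (fun t _ r hr => (hg t).liminf_right_slope_le hr)
      (sum_nonpos fun x _ => max_le (h0 x) le_rfl)
      (fun t ht => by
        rw [add_zero]
        refine hbound t ht (S t) (fun x hx => ?_) fun x hx => ?_
        · rcases (mem_filter.1 hx).2 with h | h
          exacts [h.le, h.1.ge]
        · exact not_lt.1 fun h => hx (mem_filter.2 ⟨mem_univ x, Or.inl h⟩))
      T ⟨hT, le_rfl⟩
    rwa [gronwallBound_ε0_δ0] at this
  exact (max_le_iff.1 ((single_le_sum (fun y _ => le_max_right (w T y) 0)
    (mem_univ x)).trans hgT)).1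

theorem stmt4_general (N d : ℕ) (hN : 0 < N)
    (φ f : ℝ → ℝ) (K : ℝ)
    (hφmono : StrictMono φ) (hfC1 : ContDiff ℝ 1 f)
    (up um dup dum : ℝ → (Fin d → ZMod N) → ℝ)
    (hupC1 : ∀ t x, HasDerivAt (fun s => up s x) (dup t x) t)
    (humC1 : ∀ t x, HasDerivAt (fun s => um s x) (dum t x) t)
    (hsuper : ∀ t x, 0 ≤ t →
      discLap N d (fun y => φ (up t y)) x + K * f (up t x) ≤ dup t x)
    (hsub : ∀ t x, 0 ≤ t →
      dum t x ≤ discLap N d (fun y => φ (um t y)) x + K * f (um t x))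
    (hinit : ∀ x, um 0 x ≤ up 0 x) :
    ∀ t x, 0 ≤ t → um t x ≤ up t x := by
  have : NeZero N := ⟨hN.ne'⟩
  intro T x hT
  have hum : ∀ x, Continuous (um · x) := fun x =>
    continuous_iff_continuousAt.2 fun t => (humC1 t x).continuousAt
  have hup : ∀ x, Continuous (up · x) := fun x =>
    continuous_iff_continuousAt.2 fun t => (hupC1 t x).continuousAt
  set V : Set ℝ := ⋃ x, ((um · x) '' Icc 0 T ∪ (up · x) '' Icc 0 T)
  have hV : IsCompact V := isCompact_iUnion fun x =>
    (isCompact_Icc.image (hum x)).union (isCompact_Icc.image (hup x))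
  obtain ⟨L, hL⟩ := ((contDiff_const (c := K)).mul hfC1).locallyLipschitz.locallyLipschitzOn
    |>.exists_lipschitzOnWith_of_compact hV
  refine sub_nonpos.1 <| nonpos_of_sum_deriv_le_sum_max_zero
    (w := fun t x => um t x - up t x) (L := L) hT
    (fun t x => (humC1 t x).sub (hupC1 t x)) (fun x => sub_nonpos.2 (hinit x))
    (fun t ht S hS hSc => ?_) x
  have hIcc : t ∈ Icc 0 T := Ico_subset_Icc_self ht
  exact sum_sub_le_of_sub_super (R := fun y => K * f y) hφmono.monotone hL
    (fun x => mem_iUnion.2 ⟨x, Or.inl ⟨t, hIcc, rfl⟩⟩)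
    (fun x => mem_iUnion.2 ⟨x, Or.inr ⟨t, hIcc, rfl⟩⟩)
    (fun x => hsub t x ht.1) (fun x => hsuper t x ht.1)
    (fun x hx => sub_nonneg.1 (hS x hx)) fun x hx => sub_nonpos.1 (hSc x hx)

/-- Comparison principle for the discrete nonlinear reaction-diffusion equation
`∂ₜ u = Δ^N φ(u) + K f(u)` on the discrete torus: a supersolution dominates a
subsolution for all `t ≥ 0` if it does so at `t = 0`. -/
theorem stmt4 (N d : ℕ) (hN : 0 < N)
    (φ f : ℝ → ℝ) (K : ℝ)
    (hφmono : StrictMono φ) (hφC1 : ContDiff ℝ 1 φ) (hfC1 : ContDiff ℝ 1 f)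
    (hK : 1 ≤ K)
    (up um dup dum : ℝ → (Fin d → ZMod N) → ℝ)
    (hupC1 : ∀ t x, HasDerivAt (fun s => up s x) (dup t x) t)
    (humC1 : ∀ t x, HasDerivAt (fun s => um s x) (dum t x) t)
    (hnonnegp : ∀ t x, 0 ≤ t → 0 ≤ up t x)
    (hnonnegm : ∀ t x, 0 ≤ t → 0 ≤ um t x)
    (hsuper : ∀ t x, 0 ≤ t →
      discLap N d (fun y => φ (up t y)) x + K * f (up t x) ≤ dup t x)
    (hsub : ∀ t x, 0 ≤ t →
      dum t x ≤ discLap N d (fun y => φ (um t y)) x + K * f (um t x))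
    (hinit : ∀ x, um 0 x ≤ up 0 x) :
    ∀ t x, 0 ≤ t → um t x ≤ up t x :=
  stmt4_general N d hN φ f K hφmono hfC1 up um dup dum hupC1 humC1 hsuper hsub hinit
end

section
/- Adjoint computation for the zero-range generator: for the inhomogeneous product measure $\nu = \nu_{u(\cdot)} = \prod_x \nu_{u(x)}$ with zero-range marginals, the adjoint of the zero-range generator $L_{ZR}$ applied to the constant function $1$ satisfies $L_{ZR}^{*,\nu} 1(\eta) = \sum_{x\in\mathbb{T}^d_N} \frac{N^{-2}(\Delta^N\varphi)(u(x))}{\varphi(u(x))}\,\big(g(\eta_x) - \varphi(u(x))\big)$. -/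
/-- Particle configurations on the discrete torus. -/
def Config (N d : ℕ) : Type := (Fin d → ZMod N) → ℕ

/-- `moveCfg η x y` is `η^{x,y}`: one particle at `x` jumps to `y`. -/
noncomputable def moveCfg {N d : ℕ} (η : Config N d) (x y : Fin d → ZMod N) : Config N d :=
  Function.update (Function.update η x (η x - 1)) y (Function.update η x (η x - 1) y + 1)

/-- The zero-range generator
`L_{ZR} F(η) = ∑ₓ ∑_{|e|=1} g(ηₓ) (F(η^{x,x+e}) - F(η))`. -/
noncomputable def LZR (N d : ℕ) [NeZero N] (g : ℕ → ℝ)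
    (F : Config N d → ℝ) (η : Config N d) : ℝ :=
  ∑ x : Fin d → ZMod N, ∑ i : Fin d,
    (g (η x) * (F (moveCfg η x (x + unitVec N d i)) - F η)
      + g (η x) * (F (moveCfg η x (x - unitVec N d i)) - F η))

/-!
The product measure `ν` satisfies the detailed-balance relation
`φ(u y) g(η x) ν(η) = φ(u x) g(η^{x,y}_y) ν(η^{x,y})` (from `g(k+1) p(k+1) = φ p(k)` at the two
sites involved), so the change of variables `ζ = η^{x,y}`, a bijection between `{η x ≥ 1}` and
`{ζ y ≥ 1}`, gives `∫ g(η_x) F(η^{x,y}) dν = φ(u x)/φ(u y) ∫ g(ζ_y) F(ζ) dν`. Summing over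
neighbours and shifting the torus turns these ratios into `N⁻² Δ^N φ(u x) / φ(u x)`, and the
centring by `φ(u x)` costs nothing because `∑ₓ Δ^N φ(u x) = 0`.
-/

open Finset Function

section Configurations

variable {N d : ℕ}

lemma moveCfg_apply_left_of_ne (η : Config N d) {x y : Fin d → ZMod N} (hxy : x ≠ y) :
    moveCfg η x y x = η x - 1 := by
  simp [moveCfg, update, hxy]

lemma moveCfg_apply_right_of_ne (η : Config N d) {x y : Fin d → ZMod N} (hxy : x ≠ y) :
    moveCfg η x y y = η y + 1 := by
  simp [moveCfg, update, hxy.symm]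

lemma one_le_moveCfg_apply_right (η : Config N d) (x y : Fin d → ZMod N) :
    1 ≤ moveCfg η x y y := by
  simp [moveCfg, update]

lemma moveCfg_apply_of_ne (η : Config N d) {x y z : Fin d → ZMod N} (hzx : z ≠ x)
    (hzy : z ≠ y) : moveCfg η x y z = η z := by
  simp [moveCfg, update, hzx, hzy]

lemma moveCfg_self (η : Config N d) {x : Fin d → ZMod N} (h : 1 ≤ η x) : moveCfg η x x = η := by
  funext z
  rcases eq_or_ne z x with rfl | hzx
  · simp only [moveCfg, update, dite_true]
    omega
  · exact moveCfg_apply_of_ne η hzx hzx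

lemma moveCfg_moveCfg (η : Config N d) {x y : Fin d → ZMod N} (h : 1 ≤ η x) :
    moveCfg (moveCfg η x y) y x = η := by
  rcases eq_or_ne x y with rfl | hxy
  · rw [moveCfg_self η h, moveCfg_self η h]
  funext z
  rcases eq_or_ne z x with rfl | hzx
  · rw [moveCfg_apply_right_of_ne _ hxy.symm, moveCfg_apply_left_of_ne η hxy]
    omega
  rcases eq_or_ne z y with rfl | hzy
  · rw [moveCfg_apply_left_of_ne _ hxy.symm, moveCfg_apply_right_of_ne η hxy]
    omega
  · rw [moveCfg_apply_of_ne _ hzy hzx, moveCfg_apply_of_ne η hzx hzy]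

noncomputable def moveEquiv (x y : Fin d → ZMod N) :
    {η : Config N d | 1 ≤ η x} ≃ {ζ : Config N d | 1 ≤ ζ y} where
  toFun η := ⟨moveCfg η.1 x y, one_le_moveCfg_apply_right _ _ _⟩
  invFun ζ := ⟨moveCfg ζ.1 y x, one_le_moveCfg_apply_right _ _ _⟩
  left_inv η := Subtype.ext (moveCfg_moveCfg η.1 η.2)
  right_inv ζ := Subtype.ext (moveCfg_moveCfg ζ.1 ζ.2)

lemma tsum_setOf_one_le_eq {f : Config N d → ℝ} {x : Fin d → ZMod N}
    (hf : ∀ η : Config N d, η x = 0 → f η = 0) :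
    ∑' η : {η : Config N d | 1 ≤ η x}, f η = ∑' η, f η :=
  tsum_subtype_eq_of_support_subset fun η hη => Nat.one_le_iff_ne_zero.mpr fun h0 => hη (hf η h0)

end Configurations

section ProductWeight

variable {N d : ℕ} [NeZero N]

noncomputable def prodWeight (q : (Fin d → ZMod N) → ℕ → ℝ) (η : Config N d) : ℝ :=
  ∏ x, q x (η x)

lemma prodWeight_nonneg {q : (Fin d → ZMod N) → ℕ → ℝ} (hq : ∀ x k, 0 ≤ q x k) (η : Config N d) :
    0 ≤ prodWeight q η :=
  prod_nonneg fun x _ => hq x _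

lemma prodWeight_eq_mul_mul_prod_erase (q : (Fin d → ZMod N) → ℕ → ℝ) {x y : Fin d → ZMod N}
    (hxy : x ≠ y) (η : Config N d) :
    prodWeight q η = q x (η x) * q y (η y) * ∏ z ∈ (univ.erase x).erase y, q z (η z) := by
  rw [prodWeight, ← mul_prod_erase univ _ (mem_univ x),
    ← mul_prod_erase (univ.erase x) _ (mem_erase.mpr ⟨hxy.symm, mem_univ y⟩), mul_assoc]

lemma detailed_balance {g : ℕ → ℝ} {c : (Fin d → ZMod N) → ℝ} {q : (Fin d → ZMod N) → ℕ → ℝ}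
    (hq : ∀ x k, g (k + 1) * q x (k + 1) = c x * q x k) (η : Config N d)
    {x y : Fin d → ZMod N} (h : 1 ≤ η x) :
    c y * (g (η x) * prodWeight q η) =
      c x * (g (moveCfg η x y y) * prodWeight q (moveCfg η x y)) := by
  rcases eq_or_ne x y with rfl | hxy
  · rw [moveCfg_self η h]
  obtain ⟨k, hk⟩ : ∃ k, η x = k + 1 := ⟨η x - 1, by omega⟩
  have hrest : ∏ z ∈ (univ.erase x).erase y, q z (moveCfg η x y z) =
      ∏ z ∈ (univ.erase x).erase y, q z (η z) :=
    prod_congr rfl fun z hz => by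
      rw [moveCfg_apply_of_ne η (mem_erase.mp (mem_erase.mp hz).2).1 (mem_erase.mp hz).1]
  rw [prodWeight_eq_mul_mul_prod_erase q hxy, prodWeight_eq_mul_mul_prod_erase q hxy, hrest,
    moveCfg_apply_left_of_ne η hxy, moveCfg_apply_right_of_ne η hxy, hk, Nat.add_sub_cancel]
  set R := ∏ z ∈ (univ.erase x).erase y, q z (η z)
  linear_combination (c y * q y (η y) * R) * hq x k - (c x * q x k * R) * hq y (η y)

end ProductWeight

section ChangeOfVariables

variable {N d : ℕ} [NeZero N] {g : ℕ → ℝ} {c : (Fin d → ZMod N) → ℝ}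
  {q : (Fin d → ZMod N) → ℕ → ℝ}

lemma mul_tsum_rate_mul_moveCfg (hg : g 0 = 0) (hq : ∀ x k, g (k + 1) * q x (k + 1) = c x * q x k)
    (F : Config N d → ℝ) (x y : Fin d → ZMod N) :
    c y * ∑' η, g (η x) * F (moveCfg η x y) * prodWeight q η =
      c x * ∑' ζ, g (ζ y) * F ζ * prodWeight q ζ := by
  calc c y * ∑' η, g (η x) * F (moveCfg η x y) * prodWeight q η
      = ∑' η : {η : Config N d | 1 ≤ η x},
          c y * (g (η.1 x) * F (moveCfg η.1 x y) * prodWeight q η.1) :=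
        tsum_mul_left.symm.trans (tsum_setOf_one_le_eq fun η h => by simp [h, hg]).symm
    _ = ∑' ζ : {ζ : Config N d | 1 ≤ ζ y},
          c y * (g ((moveEquiv y x ζ).1 x) * F (moveCfg (moveEquiv y x ζ).1 x y) *
            prodWeight q (moveEquiv y x ζ).1) :=
        ((moveEquiv y x).tsum_eq _).symm
    _ = ∑' ζ : {ζ : Config N d | 1 ≤ ζ y}, c x * (g (ζ.1 y) * F ζ.1 * prodWeight q ζ.1) := by
        refine tsum_congr fun ζ => ?_
        have hbal := detailed_balance hq ζ.1 (y := x) ζ.2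
        simp only [moveEquiv, Equiv.coe_fn_mk, moveCfg_moveCfg ζ.1 ζ.2]
        linear_combination (-F ζ.1) * hbal
    _ = c x * ∑' ζ, g (ζ y) * F ζ * prodWeight q ζ :=
        (tsum_setOf_one_le_eq (f := fun ζ => c x * (g (ζ y) * F ζ * prodWeight q ζ))
          fun ζ h => by simp [h, hg]).trans tsum_mul_left

lemma tsum_rate_mul_sub_moveCfg (hg : g 0 = 0)
    (hq : ∀ x k, g (k + 1) * q x (k + 1) = c x * q x k) {F : Config N d → ℝ}
    {x y : Fin d → ZMod N} (hy : c y ≠ 0)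
    (hmove : Summable fun η => g (η x) * F (moveCfg η x y) * prodWeight q η)
    (hstay : Summable fun η => g (η x) * F η * prodWeight q η) :
    ∑' η, g (η x) * (F (moveCfg η x y) - F η) * prodWeight q η =
      c x / c y * ∑' η, g (η y) * F η * prodWeight q η -
        ∑' η, g (η x) * F η * prodWeight q η := by
  simp only [mul_sub, sub_mul]
  rw [hmove.tsum_sub hstay, div_mul_eq_mul_div, ← mul_tsum_rate_mul_moveCfg hg hq F x y,
    mul_div_cancel_left₀ _ hy]

end ChangeOfVariables

lemma Summable.mul_of_nonneg_of_abs_le {ι : Type*} {a b : ι → ℝ} (ha : Summable a)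
    (ha0 : ∀ i, 0 ≤ a i) {K : ℝ} (hb : ∀ i, |b i| ≤ K) : Summable fun i => a i * b i :=
  (ha.mul_right K).of_norm_bounded fun i => by
    rw [Real.norm_eq_abs, abs_mul, abs_of_nonneg (ha0 i)]
    exact mul_le_mul_of_nonneg_left (hb i) (ha0 i)

section Generator

variable {N d : ℕ} [NeZero N] {g : ℕ → ℝ} {μ : Config N d → ℝ}

lemma summable_rate_mul_of_abs_le (hg : ∀ k, 0 ≤ g k) (hμ : ∀ η, 0 ≤ μ η)
    (hsum : Summable fun η => (∑ x, g (η x)) * μ η) (x : Fin d → ZMod N)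
    {b : Config N d → ℝ} {K : ℝ} (hb : ∀ η, |b η| ≤ K) :
    Summable fun η => g (η x) * b η * μ η := by
  have hrate : Summable fun η => g (η x) * μ η :=
    hsum.of_nonneg_of_le (fun η => mul_nonneg (hg _) (hμ η)) fun η =>
      mul_le_mul_of_nonneg_right (single_le_sum (fun z _ => hg (η z)) (mem_univ x)) (hμ η)
  exact (hrate.mul_of_nonneg_of_abs_le (fun η => mul_nonneg (hg _) (hμ η)) hb).congr
    fun η => by ring

lemma tsum_LZR_mul {F : Config N d → ℝ}
    (h : ∀ x y, Summable fun η => g (η x) * (F (moveCfg η x y) - F η) * μ η) :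
    ∑' η, LZR N d g F η * μ η =
      ∑ x, ∑ i, (∑' η, g (η x) * (F (moveCfg η x (x + unitVec N d i)) - F η) * μ η +
        ∑' η, g (η x) * (F (moveCfg η x (x - unitVec N d i)) - F η) * μ η) := by
  simp only [LZR, sum_mul, add_mul]
  rw [Summable.tsum_finsetSum fun x _ => summable_sum fun i _ => (h _ _).add (h _ _)]
  refine sum_congr rfl fun x _ => ?_
  rw [Summable.tsum_finsetSum fun i _ => (h _ _).add (h _ _)]
  exact sum_congr rfl fun i _ => (h _ _).tsum_add (h _ _)

lemma tsum_sum_mul_sub_mul {D c : (Fin d → ZMod N) → ℝ} (hDc : ∑ x, D x * c x = 0)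
    {F : Config N d → ℝ} (h : ∀ x, Summable fun η => g (η x) * F η * μ η) :
    ∑' η, (∑ x, D x * (g (η x) - c x)) * F η * μ η =
      ∑ x, D x * ∑' η, g (η x) * F η * μ η := by
  have hcentre (η : Config N d) : ∑ x, D x * (g (η x) - c x) = ∑ x, D x * g (η x) := by
    rw [← sub_zero (∑ x, D x * g (η x)), ← hDc, ← sum_sub_distrib]
    simp only [mul_sub]
  simp only [hcentre, sum_mul]
  rw [Summable.tsum_finsetSum fun x _ => ((h x).mul_left (D x)).congr fun η => by ring]
  exact sum_congr rfl fun x _ => (tsum_congr fun η => by ring).trans tsum_mul_left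

end Generator

section Torus

variable {N d : ℕ} [NeZero N]

lemma sum_discLap (v : (Fin d → ZMod N) → ℝ) : ∑ x, discLap N d v x = 0 := by
  simp only [discLap, ← mul_sum]
  rw [sum_comm]
  refine mul_eq_zero_of_right _ (sum_eq_zero fun i _ => ?_)
  rw [sum_sub_distrib, sum_add_distrib,
    Fintype.sum_equiv (Equiv.addRight _) (fun x => v (x + unitVec N d i)) v fun _ => rfl,
    Fintype.sum_equiv (Equiv.subRight _) (fun x => v (x - unitVec N d i)) v fun _ => rfl,
    ← mul_sum]
  ring

lemma sum_sum_neighbour_ratio_eq_sum_discLap {c : (Fin d → ZMod N) → ℝ} (hc : ∀ x, c x ≠ 0)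
    (A : (Fin d → ZMod N) → ℝ) :
    ∑ x, ∑ i, ((c x / c (x + unitVec N d i) * A (x + unitVec N d i) - A x) +
        (c x / c (x - unitVec N d i) * A (x - unitVec N d i) - A x)) =
      ∑ x, discLap N d c x / ((N : ℝ) ^ 2 * c x) * A x := by
  have hN : (N : ℝ) ^ 2 ≠ 0 := pow_ne_zero 2 (Nat.cast_ne_zero.mpr (NeZero.ne N))
  simp only [discLap, mul_div_mul_left _ _ hN, sum_div, sum_mul]
  rw [sum_comm, sum_comm (s := univ (α := Fin d → ZMod N))]
  refine sum_congr rfl fun i _ => ?_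
  set e := unitVec N d i
  have hplus : ∑ x, c x / c (x + e) * A (x + e) = ∑ x, c (x - e) / c x * A x :=
    Fintype.sum_equiv (Equiv.addRight e) _ _ fun x => by simp
  have hminus : ∑ x, c x / c (x - e) * A (x - e) = ∑ x, c (x + e) / c x * A x :=
    Fintype.sum_equiv (Equiv.subRight e) _ _ fun x => by simp
  rw [sum_add_distrib, sum_sub_distrib, sum_sub_distrib, hplus, hminus, ← sum_sub_distrib,
    ← sum_sub_distrib, ← sum_add_distrib]
  refine sum_congr rfl fun x _ => ?_
  field_simp [hc x]
  ring

lemma sum_discLap_div_mul_self {c : (Fin d → ZMod N) → ℝ} (hc : ∀ x, c x ≠ 0) :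
    ∑ x, discLap N d c x / ((N : ℝ) ^ 2 * c x) * c x = 0 := by
  simp only [div_mul_eq_mul_div, mul_div_mul_right _ _ (hc _), ← sum_div, sum_discLap,
    zero_div]

end Torus

theorem stmt7_general (N d : ℕ) [NeZero N] (g : ℕ → ℝ) (φ : ℝ → ℝ)
    (hg0 : ∀ k, g k = 0 ↔ k = 0) (hgnonneg : ∀ k, 0 ≤ g k)
    (u : (Fin d → ZMod N) → ℝ)
    (hφpos : ∀ x, 0 < φ (u x))
    (p : ℝ → ℕ → ℝ)
    (hpnonneg : ∀ ρ k, 0 ≤ p ρ k)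
    (hratio : ∀ x k, g (k + 1) * p (u x) (k + 1) = φ (u x) * p (u x) k)
    (ν : Config N d → ℝ)
    (hν : ∀ η, ν η = ∏ x : Fin d → ZMod N, p (u x) (η x))
    (F : Config N d → ℝ) (M : ℝ) (hF : ∀ η, |F η| ≤ M)
    (hsumrate : Summable (fun η : Config N d => (∑ x : Fin d → ZMod N, g (η x)) * ν η)) :
    ∑' η : Config N d, LZR N d g F η * ν η =
      ∑' η : Config N d,
        (∑ x : Fin d → ZMod N,
          discLap N d (fun y => φ (u y)) x / ((N : ℝ) ^ 2 * φ (u x)) *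
            (g (η x) - φ (u x))) * F η * ν η := by
  obtain rfl : ν = prodWeight fun x => p (u x) := funext hν
  have hg : g 0 = 0 := (hg0 0).mpr rfl
  have hφ (x : Fin d → ZMod N) : φ (u x) ≠ 0 := (hφpos x).ne'
  have hsum := summable_rate_mul_of_abs_le hgnonneg
    (prodWeight_nonneg fun x k => hpnonneg (u x) k) hsumrate
  have hstay x := hsum x hF
  rw [tsum_LZR_mul fun x y => hsum x fun η => (abs_sub _ _).trans (add_le_add (hF _) (hF η))]
  simp only [tsum_rate_mul_sub_moveCfg hg hratio (hφ _) (hsum _ fun η => hF _) (hstay _)]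
  exact (sum_sum_neighbour_ratio_eq_sum_discLap hφ
    fun z => ∑' η, g (η z) * F η * prodWeight (fun x => p (u x)) η).trans
      (tsum_sum_mul_sub_mul (sum_discLap_div_mul_self hφ) hstay).symm

/-- Adjoint computation for the zero-range generator: with respect to the inhomogeneous
product measure `ν = ∏ₓ ν_{u(x)}`, one has
`L_{ZR}^{*,ν} 1(η) = ∑ₓ N⁻²(Δ^N φ)(u(x))/φ(u(x)) · (g(ηₓ) - φ(u(x)))`,
i.e. `∫ L_{ZR} F dν = ∫ G F dν` for all suitable test functions `F`. -/
theorem stmt7 (N d : ℕ) [NeZero N] (g : ℕ → ℝ) (φ : ℝ → ℝ)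
    (hg0 : ∀ k, g k = 0 ↔ k = 0) (hgnonneg : ∀ k, 0 ≤ g k)
    (u : (Fin d → ZMod N) → ℝ) (hupos : ∀ x, 0 < u x)
    (hφpos : ∀ x, 0 < φ (u x))
    (p : ℝ → ℕ → ℝ)
    (hpnonneg : ∀ ρ k, 0 ≤ p ρ k)
    (hpnorm : ∀ x, ∑' k : ℕ, p (u x) k = 1)
    (hratio : ∀ x k, g (k + 1) * p (u x) (k + 1) = φ (u x) * p (u x) k)
    (ν : Config N d → ℝ)
    (hν : ∀ η, ν η = ∏ x : Fin d → ZMod N, p (u x) (η x))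
    (F : Config N d → ℝ) (M : ℝ) (hF : ∀ η, |F η| ≤ M)
    (hsumrate : Summable (fun η : Config N d => (∑ x : Fin d → ZMod N, g (η x)) * ν η))
    (hsum1 : Summable (fun η : Config N d => LZR N d g F η * ν η))
    (hsum2 : Summable (fun η : Config N d =>
      (∑ x : Fin d → ZMod N,
        discLap N d (fun y => φ (u y)) x / ((N : ℝ) ^ 2 * φ (u x)) *
          (g (η x) - φ (u x))) * F η * ν η)) :
    ∑' η : Config N d, LZR N d g F η * ν η =
      ∑' η : Config N d,
        (∑ x : Fin d → ZMod N,
          discLap N d (fun y => φ (u y)) x / ((N : ℝ) ^ 2 * φ (u x)) *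
            (g (η x) - φ (u x))) * F η * ν η :=
  stmt7_general N d g φ hg0 hgnonneg u hφpos p hpnonneg hratio ν hν F M hF hsumrate
end

section
/- Surface-tension-mobility formula: with $U_0$ the standing wave of $(\varphi(U_0))''+f(U_0)=0$ connecting $\alpha_+$ at $-\infty$ to $\alpha_-$ at $+\infty$, the constant $\lambda_0 = \frac{\int_{\mathbb{R}} (\varphi'(U_0)U_0')^2\,dz}{\int_{\mathbb{R}} \varphi'(U_0)(U_0')^2\,dz}$ equals $\lambda_0 = \frac{\int_{\alpha_-}^{\alpha_+} \varphi'(u)\sqrt{W(u)}\,du}{\int_{\alpha_-}^{\alpha_+} \sqrt{W(u)}\,du}$, where $W(u) = \int_u^{\alpha_+} f(s)\varphi'(s)\,ds$. -/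
open MeasureTheory

/-- The potential `W(u) = ∫_u^{a₊} f(s) φ'(s) ds`. -/
noncomputable def Wpot (f φd : ℝ → ℝ) (aHigh : ℝ) (u : ℝ) : ℝ :=
  ∫ s in u..aHigh, f s * φd s

/-- Surface-tension–mobility formula: for the standing wave `U₀` of
`(φ(U₀))'' + f(U₀) = 0` connecting `a₊` at `-∞` to `a₋` at `+∞`,
`λ₀ = (∫ (φ'(U₀) U₀')² dz)/(∫ φ'(U₀) (U₀')² dz)
    = (∫_{a₋}^{a₊} φ'(u) √W(u) du)/(∫_{a₋}^{a₊} √W(u) du)`. -/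
theorem stmt13 (f φ φd : ℝ → ℝ) (aLow aHigh : ℝ) (ha : aLow < aHigh)
    (hφd : ∀ u : ℝ, HasDerivAt φ (φd u) u)
    (hφdpos : ∀ u ∈ Set.Icc aLow aHigh, 0 < φd u)
    (hfcont : Continuous f)
    (hbal : (∫ s in aLow..aHigh, f s * φd s) = 0)
    (U0 dU0 : ℝ → ℝ)
    (hrange : ∀ z, U0 z ∈ Set.Ioo aLow aHigh)
    (hanti : StrictAnti U0)
    (hdU0 : ∀ z, HasDerivAt U0 (dU0 z) z)
    (hfirst : ∀ z, φd (U0 z) * dU0 z = -Real.sqrt (2 * Wpot f φd aHigh (U0 z)))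
    (hlimBot : Filter.Tendsto U0 Filter.atBot (nhds aHigh))
    (hlimTop : Filter.Tendsto U0 Filter.atTop (nhds aLow))
    (hint1 : Integrable (fun z : ℝ => (φd (U0 z) * dU0 z) ^ 2))
    (hint2 : Integrable (fun z : ℝ => φd (U0 z) * dU0 z ^ 2)) :
    (∫ z : ℝ, (φd (U0 z) * dU0 z) ^ 2) / (∫ z : ℝ, φd (U0 z) * dU0 z ^ 2) =
      (∫ u in aLow..aHigh, φd u * Real.sqrt (Wpot f φd aHigh u)) /
        (∫ u in aLow..aHigh, Real.sqrt (Wpot f φd aHigh u)) := by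

  set W : ℝ → ℝ := fun u => Wpot f φd aHigh u with hW
  have hUcont : Continuous U0 := by
    rw [continuous_iff_continuousAt]; exact fun z => (hdU0 z).continuousAt
  have hrangeU : Set.range U0 = Set.Ioo aLow aHigh := by
    apply Set.Subset.antisymm
    · rintro _ ⟨z, rfl⟩; exact hrange z
    · rintro u ⟨hu1, hu2⟩
      obtain ⟨z1, hz1⟩ := (hlimBot.eventually (eventually_gt_nhds hu2)).exists
      obtain ⟨z2, hz2⟩ := (hlimTop.eventually (eventually_lt_nhds hu1)).exists
      have hle : z1 ≤ z2 := by
        by_contra h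
        push_neg at h
        have := hanti h
        linarith
      have := intermediate_value_Icc' hle hUcont.continuousOn
        (Set.mem_Icc.2 ⟨hz2.le, hz1.le⟩)
      obtain ⟨z, _, hz⟩ := this
      exact ⟨z, hz⟩
  have hcov : ∀ g : ℝ → ℝ,
      (∫ u in Set.Ioo aLow aHigh, g u) = ∫ z : ℝ, |dU0 z| * g (U0 z) := by
    intro g
    have h := integral_image_eq_integral_abs_deriv_smul MeasurableSet.univ
      (fun x _ => (hdU0 x).hasDerivWithinAt) (hanti.injective.injOn) g
    rw [Set.image_univ, hrangeU] at h
    simpa [MeasureTheory.setIntegral_univ, smul_eq_mul] using h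
  have hdnonpos : ∀ z, dU0 z ≤ 0 := by
    intro z
    have hp := hφdpos (U0 z) (Set.mem_Icc_of_Ioo (hrange z))
    have h1 := hfirst z
    nlinarith [Real.sqrt_nonneg (2 * Wpot f φd aHigh (U0 z))]
  have hnum : ∀ z, (φd (U0 z) * dU0 z) ^ 2
      = |dU0 z| * (φd (U0 z) * Real.sqrt (2 * W (U0 z))) := by
    intro z
    rw [abs_of_nonpos (hdnonpos z)]
    linear_combination (φd (U0 z) * dU0 z) * (hfirst z)
  have hden : ∀ z, φd (U0 z) * dU0 z ^ 2
      = |dU0 z| * Real.sqrt (2 * W (U0 z)) := by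
    intro z
    rw [abs_of_nonpos (hdnonpos z)]
    linear_combination (dU0 z) * (hfirst z)
  have hsplit : ∀ u, Real.sqrt (2 * W u) = Real.sqrt 2 * Real.sqrt (W u) :=
    fun u => Real.sqrt_mul (by norm_num) _
  have e1 : (∫ z : ℝ, (φd (U0 z) * dU0 z) ^ 2)
      = Real.sqrt 2 * ∫ u in Set.Ioo aLow aHigh, φd u * Real.sqrt (W u) := by
    have h1 : (∫ z : ℝ, (φd (U0 z) * dU0 z) ^ 2)
        = ∫ u in Set.Ioo aLow aHigh, φd u * Real.sqrt (2 * W u) := by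
      rw [hcov fun u => φd u * Real.sqrt (2 * W u)]
      exact integral_congr_ae (Filter.Eventually.of_forall fun z => hnum z)
    rw [h1]
    have h2 : (fun u => φd u * Real.sqrt (2 * W u))
        = fun u => Real.sqrt 2 * (φd u * Real.sqrt (W u)) := by
      funext u; rw [hsplit]; ring
    rw [h2, MeasureTheory.integral_const_mul]
  have e2 : (∫ z : ℝ, φd (U0 z) * dU0 z ^ 2)
      = Real.sqrt 2 * ∫ u in Set.Ioo aLow aHigh, Real.sqrt (W u) := by
    have h1 : (∫ z : ℝ, φd (U0 z) * dU0 z ^ 2)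
        = ∫ u in Set.Ioo aLow aHigh, Real.sqrt (2 * W u) := by
      rw [hcov fun u => Real.sqrt (2 * W u)]
      exact integral_congr_ae (Filter.Eventually.of_forall fun z => hden z)
    rw [h1]
    have h2 : (fun u => Real.sqrt (2 * W u))
        = fun u => Real.sqrt 2 * Real.sqrt (W u) := by
      funext u; rw [hsplit]
    rw [h2, MeasureTheory.integral_const_mul]
  have e3 : (∫ u in aLow..aHigh, φd u * Real.sqrt (Wpot f φd aHigh u))
      = ∫ u in Set.Ioo aLow aHigh, φd u * Real.sqrt (W u) := by
    rw [intervalIntegral.integral_of_le ha.le,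
      MeasureTheory.integral_Ioc_eq_integral_Ioo]
  have e4 : (∫ u in aLow..aHigh, Real.sqrt (Wpot f φd aHigh u))
      = ∫ u in Set.Ioo aLow aHigh, Real.sqrt (W u) := by
    rw [intervalIntegral.integral_of_le ha.le,
      MeasureTheory.integral_Ioc_eq_integral_Ioo]
  rw [e1, e2, e3, e4]
  exact mul_div_mul_left _ _ (by positivity)
end
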